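/- Let r > 0 and t₁, t₃ be nonzero real numbers with t₁t₃ > 0 and t₃(t₁ − t₃) ≤ r² ≤ t₁(t₁ − t₃); set t₂ = t₁. Then the maximum of λ_M(ℓ) over all unit vectors ℓ ∈ ℝ³ equals max{ r²[2t₁(t₁ − t₃) − r²]/(t₁ − t₃)², 2r² + t₃², t₁² }. -/
import Mathlib


open Matrix

/-- The function `λ_M(ℓ) = r²ℓ₃² + (1/2)[r² + ℓ′² + √((r² − ℓ′²)² + 4r²t₃²ℓ₃²)]`,
where `ℓ′² = t₁²ℓ₁² + t₂²ℓ₂² + t₃²ℓ₃²`, arising in the two-sided optimization for a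
two-qubit X state with Bloch vectors `(0,0,±r)` and correlation matrix
`diag(t₁,t₂,t₃)`. -/
noncomputable def lamM (r t₁ t₂ t₃ : ℝ) (ℓ : Fin 3 → ℝ) : ℝ :=
  r ^ 2 * ℓ 2 ^ 2 + (1 / 2) *
    (r ^ 2 + (t₁ ^ 2 * ℓ 0 ^ 2 + t₂ ^ 2 * ℓ 1 ^ 2 + t₃ ^ 2 * ℓ 2 ^ 2) +
      Real.sqrt ((r ^ 2 - (t₁ ^ 2 * ℓ 0 ^ 2 + t₂ ^ 2 * ℓ 1 ^ 2 + t₃ ^ 2 * ℓ 2 ^ 2)) ^ 2 +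
        4 * r ^ 2 * t₃ ^ 2 * ℓ 2 ^ 2))

/-- Pointwise upper bound for the one-variable reduction of `λ_M`. -/
lemma lamM_aux (r t₁ t₃ M u : ℝ) (hr : 0 < r) (hu0 : 0 ≤ u) (hu1 : u ≤ 1)
    (h13 : r ^ 2 ≤ t₁ ^ 2 - t₃ ^ 2)
    (hM1 : 2 * r ^ 2 + t₃ ^ 2 ≤ M) (hM2 : t₁ ^ 2 ≤ M) :
    r ^ 2 * u + (1 / 2) * (r ^ 2 + (t₁ ^ 2 * (1 - u) + t₃ ^ 2 * u) +
      Real.sqrt ((r ^ 2 - (t₁ ^ 2 * (1 - u) + t₃ ^ 2 * u)) ^ 2 + 4 * r ^ 2 * t₃ ^ 2 * u)) ≤ M := by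
  have hr2 : (0:ℝ) < r ^ 2 := by positivity
  have hu1' : (0:ℝ) ≤ 1 - u := by linarith
  have hb1 : (0:ℝ) ≤ 2 * M - r ^ 2 - t₁ ^ 2 := by nlinarith [sq_nonneg t₃]
  have hb2 : (0:ℝ) ≤ 2 * M - 3 * r ^ 2 - t₃ ^ 2 := by nlinarith
  have hLpos : 0 ≤ 2 * M - 2 * r ^ 2 * u - r ^ 2 - (t₁ ^ 2 * (1 - u) + t₃ ^ 2 * u) := by
    nlinarith [mul_nonneg hu1' hb1, mul_nonneg hu0 hb2]
  have hMr : (0:ℝ) ≤ M - r ^ 2 := by nlinarith [sq_nonneg t₃]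
  have hg : (r ^ 2 - (t₁ ^ 2 * (1 - u) + t₃ ^ 2 * u)) ^ 2 + 4 * r ^ 2 * t₃ ^ 2 * u ≤
      (2 * M - 2 * r ^ 2 * u - r ^ 2 - (t₁ ^ 2 * (1 - u) + t₃ ^ 2 * u)) ^ 2 := by
    nlinarith [mul_nonneg (mul_nonneg hu0 hu1') (mul_nonneg hr2.le (by linarith : (0:ℝ) ≤ t₁ ^ 2 - t₃ ^ 2 - r ^ 2)),
      mul_nonneg (mul_nonneg hMr (by linarith : (0:ℝ) ≤ M - t₁ ^ 2)) hu1',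
      mul_nonneg (mul_nonneg (by linarith : (0:ℝ) ≤ M - (2 * r ^ 2 + t₃ ^ 2)) hMr) hu0]
  have hsq : Real.sqrt ((r ^ 2 - (t₁ ^ 2 * (1 - u) + t₃ ^ 2 * u)) ^ 2 + 4 * r ^ 2 * t₃ ^ 2 * u) ≤
      2 * M - 2 * r ^ 2 * u - r ^ 2 - (t₁ ^ 2 * (1 - u) + t₃ ^ 2 * u) := by
    calc Real.sqrt ((r ^ 2 - (t₁ ^ 2 * (1 - u) + t₃ ^ 2 * u)) ^ 2 + 4 * r ^ 2 * t₃ ^ 2 * u)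
        ≤ Real.sqrt ((2 * M - 2 * r ^ 2 * u - r ^ 2 - (t₁ ^ 2 * (1 - u) + t₃ ^ 2 * u)) ^ 2) :=
          Real.sqrt_le_sqrt hg
      _ = 2 * M - 2 * r ^ 2 * u - r ^ 2 - (t₁ ^ 2 * (1 - u) + t₃ ^ 2 * u) := Real.sqrt_sq hLpos
  linarith

/-- If `t₁t₃ > 0`, `t₃(t₁ − t₃) ≤ r² ≤ t₁(t₁ − t₃)` and `t₂ = t₁`, then the
maximum of `λ_M` over the unit sphere equals
`max{r²[2t₁(t₁ − t₃) − r²]/(t₁ − t₃)², 2r² + t₃², t₁²}`. -/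
theorem stmt_17 (r t₁ t₂ t₃ : ℝ) (hr : 0 < r)
    (hsign : 0 < t₁ * t₃)
    (hlow : t₃ * (t₁ - t₃) ≤ r ^ 2) (hhigh : r ^ 2 ≤ t₁ * (t₁ - t₃))
    (ht2 : t₂ = t₁) :
    IsGreatest {s : ℝ | ∃ ℓ : Fin 3 → ℝ, ℓ ⬝ᵥ ℓ = 1 ∧ s = lamM r t₁ t₂ t₃ ℓ}
      (max (r ^ 2 * (2 * t₁ * (t₁ - t₃) - r ^ 2) / (t₁ - t₃) ^ 2)
        (max (2 * r ^ 2 + t₃ ^ 2) (t₁ ^ 2))) := by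
  rw [ht2]
  have hr2 : (0:ℝ) < r ^ 2 := by positivity
  have ht1d : 0 < t₁ * (t₁ - t₃) := lt_of_lt_of_le hr2 hhigh
  have ht3d : 0 < t₃ * (t₁ - t₃) := by nlinarith [mul_pos hsign ht1d, sq_nonneg t₁]
  have hrt1 : r ^ 2 < t₁ ^ 2 := by nlinarith
  have h13 : r ^ 2 ≤ t₁ ^ 2 - t₃ ^ 2 := by nlinarith
  have hd2 : (0:ℝ) < (t₁ - t₃) ^ 2 := by
    rcases eq_or_ne (t₁ - t₃) 0 with h | h
    · rw [h] at ht1d; simp at ht1d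
    · positivity
  have hAle : r ^ 2 * (2 * t₁ * (t₁ - t₃) - r ^ 2) / (t₁ - t₃) ^ 2 ≤ t₁ ^ 2 := by
    rw [div_le_iff₀ hd2]
    nlinarith [sq_nonneg (t₁ * (t₁ - t₃) - r ^ 2)]
  have hmax : max (r ^ 2 * (2 * t₁ * (t₁ - t₃) - r ^ 2) / (t₁ - t₃) ^ 2)
      (max (2 * r ^ 2 + t₃ ^ 2) (t₁ ^ 2)) = max (2 * r ^ 2 + t₃ ^ 2) (t₁ ^ 2) :=
    max_eq_right (hAle.trans (le_max_right _ _))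
  rw [hmax]
  constructor
  · -- membership
    rcases le_total (t₁ ^ 2) (2 * r ^ 2 + t₃ ^ 2) with h | h
    · rw [max_eq_left h]
      refine ⟨![0, 0, 1], by simp [dotProduct, Fin.sum_univ_three], ?_⟩
      have hs : (r ^ 2 - (t₁ ^ 2 * (0:ℝ) ^ 2 + t₁ ^ 2 * (0:ℝ) ^ 2 + t₃ ^ 2 * (1:ℝ) ^ 2)) ^ 2 +
          4 * r ^ 2 * t₃ ^ 2 * (1:ℝ) ^ 2 = (r ^ 2 + t₃ ^ 2) ^ 2 := by ring
      simp only [lamM, Matrix.cons_val_zero, Matrix.cons_val_one, Matrix.head_cons,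
        Matrix.cons_val_two, Matrix.tail_cons]
      rw [hs, Real.sqrt_sq (by positivity)]
      ring
    · rw [max_eq_right h]
      refine ⟨![1, 0, 0], by simp [dotProduct, Fin.sum_univ_three], ?_⟩
      have hs : (r ^ 2 - (t₁ ^ 2 * (1:ℝ) ^ 2 + t₁ ^ 2 * (0:ℝ) ^ 2 + t₃ ^ 2 * (0:ℝ) ^ 2)) ^ 2 +
          4 * r ^ 2 * t₃ ^ 2 * (0:ℝ) ^ 2 = (t₁ ^ 2 - r ^ 2) ^ 2 := by ring
      simp only [lamM, Matrix.cons_val_zero, Matrix.cons_val_one, Matrix.head_cons,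
        Matrix.cons_val_two, Matrix.tail_cons]
      rw [hs, Real.sqrt_sq (by linarith)]
      ring
  · -- upper bound
    rintro s ⟨ℓ, hℓ, rfl⟩
    have hsum : ℓ 0 ^ 2 + ℓ 1 ^ 2 + ℓ 2 ^ 2 = 1 := by
      simp only [dotProduct, Fin.sum_univ_three] at hℓ
      linear_combination hℓ
    have hu0 : 0 ≤ ℓ 2 ^ 2 := sq_nonneg _
    have hu1 : ℓ 2 ^ 2 ≤ 1 := by nlinarith [sq_nonneg (ℓ 0), sq_nonneg (ℓ 1)]
    have hE : t₁ ^ 2 * ℓ 0 ^ 2 + t₁ ^ 2 * ℓ 1 ^ 2 + t₃ ^ 2 * ℓ 2 ^ 2 =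
        t₁ ^ 2 * (1 - ℓ 2 ^ 2) + t₃ ^ 2 * ℓ 2 ^ 2 := by linear_combination t₁ ^ 2 * hsum
    have hM1 : 2 * r ^ 2 + t₃ ^ 2 ≤ max (2 * r ^ 2 + t₃ ^ 2) (t₁ ^ 2) := le_max_left _ _
    have hM2 : t₁ ^ 2 ≤ max (2 * r ^ 2 + t₃ ^ 2) (t₁ ^ 2) := le_max_right _ _
    have := lamM_aux r t₁ t₃ (max (2 * r ^ 2 + t₃ ^ 2) (t₁ ^ 2)) (ℓ 2 ^ 2) hr hu0 hu1 h13 hM1 hM2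
    simpa only [lamM, hE] using this
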